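/- The bounded Robba ring E_K^† is a field: every nonzero element ∑_{i∈ℤ} a_i t^i with sup_i ‖a_i‖ < ∞ and such that there exists η < 1 with ‖a_i‖η^i → 0 as i → −∞, has a multiplicative inverse satisfying the same conditions. -/

import Mathlib

/-!
STATEMENT 1: The bounded Robba ring `E_K^†` is a field: every nonzero element
`∑ aᵢ tⁱ` with `sup ‖aᵢ‖ < ∞` and such that there exists `η < 1` with
`‖aᵢ‖ ηⁱ → 0` as `i → -∞`, has a multiplicative inverse satisfying the same
conditions.  Here `K` is a complete discretely valued nonarchimedean field of
characteristic 0.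
-/

open Filter Topology

variable {K : Type*} [NontriviallyNormedField K] [CompleteSpace K] [CharZero K]
  [IsUltrametricDist K]

/-- Membership in the bounded Robba ring: bounded coefficients such that for some
`η < 1`, `‖aᵢ‖ηⁱ → 0` as `i → -∞`. -/
def BoundedRobbaMem (a : ℤ → K) : Prop :=
  BddAbove (Set.range fun i : ℤ => ‖a i‖) ∧
    ∃ η : ℝ, 0 < η ∧ η < 1 ∧ Tendsto (fun i : ℤ => ‖a i‖ * η ^ i) atBot (𝓝 0)

/-- Multiplication of doubly infinite series (convolution). -/
noncomputable def seriesMul (a b : ℤ → K) : ℤ → K :=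
  fun n => ∑' i : ℤ, a i * b (n - i)

/-- The unit series `1 = t^0`. -/
def seriesOne : ℤ → K := fun n => if n = 0 then 1 else 0

/-!
Since `K` is discretely valued, a nonzero `a` has a coefficient of maximal norm, and since
`‖aᵢ‖ → 0` as `i → -∞` there is a leftmost one, `a_{i₀}`; by the gap between consecutive absolute
values, every coefficient to its left is smaller by the factor `c < 1`. Dividing by `a_{i₀} t^{i₀}`
writes `a` as a monomial times `1 - u` with `|u|₁ ≤ 1` and, for `r < 1` close enough to `1`,
`|u|_r ≤ q < 1`, where `|x|_ρ = sup ‖xᵢ‖ ρⁱ`. Both Gauss norms are submultiplicative over an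
ultrametric field, so the geometric series `∑ uᵏ` converges coefficientwise to an inverse of
`1 - u` with `|·|_r`-bounded coefficients, which therefore lies in the bounded Robba ring.
-/

theorem tendsto_zpow_atTop_nhds_zero_of_lt_one {r : ℝ} (h0 : 0 ≤ r) (h1 : r < 1) :
    Tendsto (fun i : ℤ => r ^ i) atTop (𝓝 0) := by
  have hToNat : Tendsto Int.toNat atTop atTop :=
    tendsto_atTop_atTop_of_monotone (fun _ _ h => Int.toNat_le_toNat h)
      fun n => ⟨n, by simp⟩
  refine ((tendsto_pow_atTop_nhds_zero_of_lt_one h0 h1).comp hToNat).congr' ?_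
  filter_upwards [eventually_ge_atTop 0] with i hi
  simp [← zpow_natCast, Int.toNat_of_nonneg hi]

theorem tendsto_zpow_neg_atBot_nhds_zero_of_lt_one {r : ℝ} (h0 : 0 ≤ r) (h1 : r < 1) :
    Tendsto (fun i : ℤ => r ^ (-i)) atBot (𝓝 0) :=
  (tendsto_zpow_atTop_nhds_zero_of_lt_one h0 h1).comp tendsto_neg_atBot_atTop

theorem tendsto_atBot_of_tendsto_mul_zpow {f : ℤ → ℝ} {η : ℝ} (hf : ∀ i, 0 ≤ f i)
    (hη0 : 0 < η) (hη1 : η ≤ 1) (h : Tendsto (fun i => f i * η ^ i) atBot (𝓝 0)) :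
    Tendsto f atBot (𝓝 0) :=
  squeeze_zero' (.of_forall hf)
    ((eventually_le_atBot 0).mono fun i hi =>
      le_mul_of_one_le_right (hf i) (one_le_zpow_of_nonpos₀ hη0 hη1 hi)) h

/-- Far to the left the bound comes from the decay condition, at the finitely many remaining
negative indices from the continuity of `r ↦ r ^ N` at `1`. -/
theorem exists_mul_zpow_le_of_dominant {f : ℤ → ℝ} {c η : ℝ} (hc0 : 0 < c) (hc1 : c < 1)
    (hη0 : 0 < η) (hη1 : η < 1) (hf0 : ∀ m, 0 ≤ f m) (hf1 : ∀ m, f m ≤ 1)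
    (hneg : ∀ m < 0, f m ≤ c) (hdec : Tendsto (fun m => f m * η ^ m) atBot (𝓝 0)) :
    ∃ r q : ℝ, 0 < r ∧ r < 1 ∧ 0 ≤ q ∧ q < 1 ∧ ∀ m ≠ 0, f m * r ^ m ≤ q := by
  obtain ⟨N, hN⟩ := eventually_atBot.mp (hdec.eventually (eventually_le_nhds hc0))
  have hnear : ∀ᶠ r in 𝓝[<] (1 : ℝ), η < r ∧ c * r ^ N < 1 := by
    have hcont : Tendsto (fun r : ℝ => c * r ^ N) (𝓝 1) (𝓝 c) := by
      simpa using ((continuousAt_zpow₀ (1 : ℝ) N (.inl one_ne_zero)).tendsto.const_mul c)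
    exact nhdsWithin_le_nhds ((eventually_gt_nhds hη1).and (hcont.eventually (gt_mem_nhds hc1)))
  obtain ⟨r, ⟨hηr, hcr⟩, hr1 : r < 1⟩ := (hnear.and self_mem_nhdsWithin).exists
  have hr0 : 0 < r := hη0.trans hηr
  refine ⟨r, max r (max c (c * r ^ N)), hr0, hr1, hr0.le.trans (le_max_left _ _),
    max_lt hr1 (max_lt hc1 hcr), fun m hm => ?_⟩
  rcases hm.lt_or_gt with hm | hm
  · by_cases hmN : m ≤ N
    · have hrη : r ^ m ≤ η ^ m := by
        simpa only [zpow_neg, inv_inv] using inv_anti₀ (zpow_pos hη0 _)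
          (zpow_le_zpow_left₀ (neg_nonneg.mpr hm.le) hη0.le hηr.le)
      calc f m * r ^ m ≤ f m * η ^ m := mul_le_mul_of_nonneg_left hrη (hf0 m)
        _ ≤ c := hN m hmN
        _ ≤ _ := le_max_of_le_right (le_max_left _ _)
    · calc f m * r ^ m ≤ c * r ^ N :=
            mul_le_mul (hneg m hm) (zpow_le_zpow_right_of_le_one₀ hr0 hr1.le (by omega))
              (zpow_pos hr0 m).le hc0.le
        _ ≤ _ := le_max_of_le_right (le_max_right _ _)
  · calc f m * r ^ m ≤ 1 * r ^ (1 : ℤ) :=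
          mul_le_mul (hf1 m) (zpow_le_zpow_right_of_le_one₀ hr0 hr1.le hm)
            (zpow_pos hr0 m).le zero_le_one
      _ = r := by rw [one_mul, zpow_one]
      _ ≤ _ := le_max_left _ _

section Discrete

variable {F : Type*} [NontriviallyNormedField F] {c : ℝ}

theorem norm_le_mul_norm_of_norm_lt (hc0 : 0 < c) (hc1 : c < 1)
    (hcv : ∀ x : F, x ≠ 0 → ∃ n : ℤ, ‖x‖ = c ^ n) {x y : F} (h : ‖y‖ < ‖x‖) :
    ‖y‖ ≤ c * ‖x‖ := by
  rcases eq_or_ne y 0 with rfl | hy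
  · rw [norm_zero]
    exact mul_nonneg hc0.le (norm_nonneg x)
  obtain ⟨m, hm⟩ := hcv y hy
  obtain ⟨n, hn⟩ := hcv x (norm_pos_iff.mp ((norm_nonneg y).trans_lt h))
  rw [hm, hn] at h ⊢
  have hnm : n + 1 ≤ m := (zpow_lt_zpow_iff_right_of_lt_one₀ hc0 hc1).mp h
  calc c ^ m ≤ c ^ (n + 1) := zpow_le_zpow_right_of_le_one₀ hc0 hc1.le hnm
    _ = c * c ^ n := by rw [zpow_add_one₀ hc0.ne', mul_comm]

/-- A coefficient within a factor `c` of the supremum is maximal: by the gap between consecutive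
absolute values, no coefficient can be larger. -/
theorem exists_forall_norm_le_of_discrete {ι : Type*} (hc0 : 0 < c) (hc1 : c < 1)
    (hcv : ∀ x : F, x ≠ 0 → ∃ n : ℤ, ‖x‖ = c ^ n) {x : ι → F}
    (hbdd : BddAbove (Set.range fun i => ‖x i‖)) (hx : x ≠ 0) :
    ∃ i₀, ∀ i, ‖x i‖ ≤ ‖x i₀‖ := by
  obtain ⟨i₁, hi₁⟩ := Function.ne_iff.mp hx
  have hS : 0 < ⨆ i, ‖x i‖ := (norm_pos_iff.mpr hi₁).trans_le (le_ciSup hbdd i₁)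
  obtain ⟨i₀, hi₀⟩ : ∃ i₀, c * ⨆ i, ‖x i‖ < ‖x i₀‖ :=
    haveI : Nonempty ι := ⟨i₁⟩
    exists_lt_of_lt_ciSup (mul_lt_of_lt_one_left hS hc1)
  refine ⟨i₀, fun i => not_lt.mp fun hlt => ?_⟩
  have hgap := norm_le_mul_norm_of_norm_lt hc0 hc1 hcv hlt
  have hle := mul_le_mul_of_nonneg_left (le_ciSup hbdd i) hc0.le
  linarith

theorem exists_dominant_index (hc0 : 0 < c) (hc1 : c < 1)
    (hcv : ∀ x : F, x ≠ 0 → ∃ n : ℤ, ‖x‖ = c ^ n) {x : ℤ → F}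
    (hbdd : BddAbove (Set.range fun i => ‖x i‖)) (hx : x ≠ 0)
    (hdec : Tendsto (fun i => ‖x i‖) atBot (𝓝 0)) :
    ∃ i₀, x i₀ ≠ 0 ∧ (∀ i, ‖x i‖ ≤ ‖x i₀‖) ∧ ∀ i < i₀, ‖x i‖ ≤ c * ‖x i₀‖ := by
  obtain ⟨i₁, hmax⟩ := exists_forall_norm_le_of_discrete hc0 hc1 hcv hbdd hx
  obtain ⟨j, hj⟩ := Function.ne_iff.mp hx
  have hpos : 0 < ‖x i₁‖ := (norm_pos_iff.mpr hj).trans_le (hmax j)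
  obtain ⟨N, hN⟩ := eventually_atBot.mp (hdec.eventually_lt_const hpos)
  obtain ⟨i₀, hi₀, hleast⟩ := Int.exists_least_of_bdd (P := fun i => ‖x i‖ = ‖x i₁‖)
    ⟨N, fun i hi => le_of_not_ge fun hiN => (hN i hiN).ne hi⟩ ⟨i₁, rfl⟩
  refine ⟨i₀, norm_pos_iff.mp (hi₀ ▸ hpos), fun i => hi₀ ▸ hmax i, fun i hi => ?_⟩
  have hlt : ‖x i‖ < ‖x i₀‖ :=
    hi₀ ▸ (hmax i).lt_of_ne fun he => (hleast i he).not_gt hi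
  exact norm_le_mul_norm_of_norm_lt hc0 hc1 hcv hlt

end Discrete

section Series

variable {F : Type*} [NontriviallyNormedField F]

/-- The coefficient bounds `|x|₁ ≤ C` and `|x|_r ≤ D` for the Gauss norms
`|x|_ρ = sup ‖xᵢ‖ ρⁱ`. -/
def GaussBounded (r C D : ℝ) (x : ℤ → F) : Prop :=
  ∀ i, ‖x i‖ ≤ C ∧ ‖x i‖ ≤ D * r ^ (-i)

variable {r C D C₁ D₁ C₂ D₂ : ℝ} {x y : ℤ → F}

theorem gaussBounded_seriesOne (hr : 0 ≤ r) : GaussBounded r 1 1 (seriesOne : ℤ → F) := by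
  intro i
  by_cases hi : i = 0
  · simp [seriesOne, hi]
  · simp only [seriesOne, if_neg hi, norm_zero]
    exact ⟨zero_le_one, mul_nonneg zero_le_one (zpow_nonneg hr _)⟩

namespace GaussBounded

theorem nonneg_left (hx : GaussBounded r C D x) : 0 ≤ C :=
  (norm_nonneg _).trans (hx 0).1

theorem nonneg_right (hx : GaussBounded r C D x) : 0 ≤ D := by
  simpa using (norm_nonneg _).trans (hx 0).2

theorem mono {C' D' : ℝ} (hx : GaussBounded r C D x) (hC : C ≤ C') (hD : D ≤ D') (hr0 : 0 < r) :
    GaussBounded r C' D' x := fun i =>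
  ⟨(hx i).1.trans hC, (hx i).2.trans (mul_le_mul_of_nonneg_right hD (zpow_pos hr0 _).le)⟩

theorem sub [IsUltrametricDist F] (hx : GaussBounded r C D x) (hy : GaussBounded r C D y) :
    GaussBounded r C D (x - y) := fun i => by
  have h := IsUltrametricDist.norm_add_le_max (x i) (-y i)
  rw [← sub_eq_add_neg, norm_neg] at h
  exact ⟨h.trans (max_le (hx i).1 (hy i).1), h.trans (max_le (hx i).2 (hy i).2)⟩

theorem tsum [IsUltrametricDist F] {ι : Type*} {w : ι → ℤ → F} (hC : 0 ≤ C) (hD : 0 ≤ D)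
    (hr0 : 0 < r) (hw : ∀ k, GaussBounded r C D (w k)) :
    GaussBounded r C D fun m => ∑' k, w k m := fun m =>
  ⟨IsUltrametricDist.norm_tsum_le_of_forall_le_of_nonneg hC fun k => (hw k m).1,
    IsUltrametricDist.norm_tsum_le_of_forall_le_of_nonneg (mul_nonneg hD (zpow_pos hr0 _).le)
      fun k => (hw k m).2⟩

theorem tendsto_apply_zero {ι : Type*} {l : Filter ι} {v : ι → ℤ → F} {ε : ι → ℝ}
    (hv : ∀ n, GaussBounded r C (ε n) (v n)) (hε : Tendsto ε l (𝓝 0)) (m : ℤ) :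
    Tendsto (fun n => v n m) l (𝓝 0) :=
  squeeze_zero_norm (fun n => (hv n m).2) (by simpa using hε.mul_const (r ^ (-m)))

theorem summable_mul_sub [CompleteSpace F] [IsUltrametricDist F] (hx : GaussBounded r C₁ D₁ x)
    (hy : GaussBounded r C₂ D₂ y) (hr0 : 0 < r) (hr1 : r < 1) (j : ℤ) :
    Summable fun i => x i * y (j - i) := by
  refine NonarchimedeanAddGroup.summable_of_tendsto_cofinite_zero ?_
  rw [Int.cofinite_eq, tendsto_sup]
  constructor
  · refine squeeze_zero_norm (a := fun i => D₁ * C₂ * r ^ (-i)) (fun i => ?_) ?_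
    · rw [norm_mul, mul_right_comm]
      exact mul_le_mul (hx i).2 (hy _).1 (norm_nonneg _)
        (mul_nonneg hx.nonneg_right (zpow_pos hr0 _).le)
    · simpa using (tendsto_zpow_neg_atBot_nhds_zero_of_lt_one hr0.le hr1).const_mul (D₁ * C₂)
  · refine squeeze_zero_norm (a := fun i => C₁ * D₂ * r ^ (-j) * r ^ i) (fun i => ?_) ?_
    · calc ‖x i * y (j - i)‖ ≤ C₁ * (D₂ * r ^ (-(j - i))) := by
            rw [norm_mul]; exact mul_le_mul (hx i).1 (hy _).2 (norm_nonneg _) hx.nonneg_left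
        _ = C₁ * D₂ * r ^ (-j) * r ^ i := by
            rw [show -(j - i) = -j + i by ring, zpow_add₀ hr0.ne']; ring
    · simpa using (tendsto_zpow_atTop_nhds_zero_of_lt_one hr0.le hr1).const_mul (C₁ * D₂ * r ^ (-j))

theorem seriesMul [IsUltrametricDist F] (hx : GaussBounded r C₁ D₁ x)
    (hy : GaussBounded r C₂ D₂ y) (hr0 : 0 < r) :
    GaussBounded r (C₁ * C₂) (D₁ * D₂) (seriesMul x y) := fun j => by
  have hC := mul_nonneg hx.nonneg_left hy.nonneg_left
  have hD := mul_nonneg hx.nonneg_right hy.nonneg_right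
  refine ⟨IsUltrametricDist.norm_tsum_le_of_forall_le_of_nonneg hC fun i => ?_,
    IsUltrametricDist.norm_tsum_le_of_forall_le_of_nonneg (mul_nonneg hD (zpow_pos hr0 _).le)
      fun i => ?_⟩
  · rw [norm_mul]
    exact mul_le_mul (hx i).1 (hy _).1 (norm_nonneg _) hx.nonneg_left
  · calc ‖x i * y (j - i)‖ ≤ D₁ * r ^ (-i) * (D₂ * r ^ (-(j - i))) := by
          rw [norm_mul]
          exact mul_le_mul (hx i).2 (hy _).2 (norm_nonneg _)
            (mul_nonneg hx.nonneg_right (zpow_pos hr0 _).le)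
      _ = D₁ * D₂ * r ^ (-j) := by
          rw [mul_mul_mul_comm, ← zpow_add₀ hr0.ne']; ring_nf

theorem iterate_seriesMul [IsUltrametricDist F] {u : ℤ → F} (hu : GaussBounded r C D u)
    (hr0 : 0 < r) (k : ℕ) :
    GaussBounded r (C ^ k) (D ^ k) ((_root_.seriesMul u)^[k] seriesOne) := by
  induction k with
  | zero => simpa using gaussBounded_seriesOne hr0.le
  | succ k ih =>
    rw [Function.iterate_succ_apply', pow_succ', pow_succ']
    exact hu.seriesMul ih hr0

end GaussBounded

theorem seriesMul_seriesOne_left (y : ℤ → F) : seriesMul seriesOne y = y := by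
  funext j
  rw [seriesMul, tsum_eq_single 0 fun i hi => by simp [seriesOne, hi]]
  simp [seriesOne]

theorem seriesMul_sub_left {z : ℤ → F} (hx : ∀ j, Summable fun i => x i * z (j - i))
    (hy : ∀ j, Summable fun i => y i * z (j - i)) :
    seriesMul (x - y) z = seriesMul x z - seriesMul y z := by
  funext j
  simp only [seriesMul, Pi.sub_apply, sub_mul]
  exact (hx j).tsum_sub (hy j)

theorem seriesMul_sub_right {z : ℤ → F} (hy : ∀ j, Summable fun i => x i * y (j - i))
    (hz : ∀ j, Summable fun i => x i * z (j - i)) :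
    seriesMul x (y - z) = seriesMul x y - seriesMul x z := by
  funext j
  simp only [seriesMul, Pi.sub_apply, mul_sub]
  exact (hy j).tsum_sub (hz j)

theorem seriesMul_finsetSum_right {ι : Type*} {s : Finset ι} {w : ι → ℤ → F}
    (hw : ∀ k ∈ s, ∀ j, Summable fun i => x i * w k (j - i)) :
    seriesMul x (fun m => ∑ k ∈ s, w k m) = fun j => ∑ k ∈ s, seriesMul x (w k) j := by
  funext j
  simp only [seriesMul, Finset.mul_sum]
  exact Summable.tsum_finsetSum fun k hk => hw k hk j

end Series

section Inverse

variable {F : Type*} [NontriviallyNormedField F] [CompleteSpace F] [IsUltrametricDist F] {r : ℝ}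

theorem seriesMul_one_sub_sum_iterate {C D : ℝ} {u : ℤ → F} (hr0 : 0 < r) (hr1 : r < 1)
    (hu : GaussBounded r C D u) (n : ℕ) :
    seriesMul (seriesOne - u) (fun m => ∑ k ∈ Finset.range n, (seriesMul u)^[k] seriesOne m) =
      seriesOne - (seriesMul u)^[n] seriesOne := by
  have hone_sum k := (gaussBounded_seriesOne hr0.le).summable_mul_sub (hu.iterate_seriesMul hr0 k)
    hr0 hr1
  have hu_sum k := hu.summable_mul_sub (hu.iterate_seriesMul hr0 k) hr0 hr1
  have hstep : ∀ k, seriesMul (seriesOne - u) ((seriesMul u)^[k] seriesOne) =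
      (seriesMul u)^[k] seriesOne - (seriesMul u)^[k + 1] seriesOne := fun k => by
    rw [seriesMul_sub_left (hone_sum k) (hu_sum k), seriesMul_seriesOne_left,
      Function.iterate_succ_apply']
  rw [seriesMul_finsetSum_right fun k _ j => by
    simpa only [Pi.sub_apply, sub_mul] using (hone_sum k j).sub (hu_sum k j)]
  funext j
  simp only [hstep, Pi.sub_apply, Finset.sum_range_sub']
  rfl

/-- The inverse of `1 - u` is the geometric series `∑ₖ uᵏ`. -/
theorem exists_seriesMul_one_sub_eq_one {q : ℝ} {u : ℤ → F} (hr0 : 0 < r) (hr1 : r < 1)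
    (hq1 : q < 1) (hu : GaussBounded r 1 q u) :
    ∃ b, GaussBounded r 1 1 b ∧ seriesMul (seriesOne - u) b = seriesOne := by
  have hq0 : 0 ≤ q := hu.nonneg_right
  have hq_pow : Tendsto (fun n => q ^ n) atTop (𝓝 0) :=
    tendsto_pow_atTop_nhds_zero_of_lt_one hq0 hq1
  set w : ℕ → ℤ → F := fun k => (seriesMul u)^[k] seriesOne
  have hw : ∀ k, GaussBounded r 1 (q ^ k) (w k) := fun k => by
    simpa using hu.iterate_seriesMul hr0 k
  have hw_sum : ∀ m, Summable fun k => w k m := fun m =>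
    NonarchimedeanAddGroup.summable_of_tendsto_cofinite_zero
      (Nat.cofinite_eq_atTop ▸ GaussBounded.tendsto_apply_zero hw hq_pow m)
  set T : ℕ → ℤ → F := fun n m => ∑' k, w (k + n) m
  have hT : ∀ n, GaussBounded r 1 (q ^ n) (T n) := fun n =>
    GaussBounded.tsum zero_le_one (pow_nonneg hq0 n) hr0 fun k =>
      (hw (k + n)).mono le_rfl (pow_le_pow_of_le_one hq0 hq1.le (Nat.le_add_left n k)) hr0
  set B : ℕ → ℤ → F := fun n m => ∑ k ∈ Finset.range n, w k m
  have hBT : ∀ n, B n = T 0 - T n := fun n => funext fun m =>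
    eq_sub_of_add_eq (by simpa [T] using (hw_sum m).sum_add_tsum_nat_add n)
  set a : ℤ → F := seriesOne - u
  have ha : GaussBounded r 1 1 a :=
    (gaussBounded_seriesOne hr0.le).sub (hu.mono le_rfl hq1.le hr0)
  refine ⟨T 0, by simpa using hT 0, funext fun j => tendsto_nhds_unique (f := fun n =>
    seriesMul a (B n) j) (l := atTop) ?_ ?_⟩
  · have hT_mul : Tendsto (fun n => seriesMul a (T n) j) atTop (𝓝 0) :=
      GaussBounded.tendsto_apply_zero (fun n => ha.seriesMul (hT n) hr0)
        (by simpa using hq_pow) j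
    refine (sub_zero (seriesMul a (T 0) j) ▸ tendsto_const_nhds.sub hT_mul).congr fun n => ?_
    rw [hBT n, seriesMul_sub_right (ha.summable_mul_sub (hT 0) hr0 hr1)
      (ha.summable_mul_sub (hT n) hr0 hr1), Pi.sub_apply]
  · refine (sub_zero (seriesOne j : F) ▸
      tendsto_const_nhds.sub (GaussBounded.tendsto_apply_zero hw hq_pow j)).congr fun n => ?_
    rw [seriesMul_one_sub_sum_iterate hr0 hr1 hu n, Pi.sub_apply]

end Inverse

section Monomial

variable {F : Type*} [NontriviallyNormedField F]

/-- `monomialMul s k x` is the product `s t⁻ᵏ x`. -/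
def monomialMul (s : F) (k : ℤ) (x : ℤ → F) : ℤ → F := fun m => s * x (m + k)

theorem seriesMul_monomialMul_right (s : F) (k : ℤ) (x y : ℤ → F) :
    seriesMul x (monomialMul s k y) = seriesMul (monomialMul s k x) y := by
  funext j
  refine ((Equiv.addRight k).tsum_eq _).symm.trans (tsum_congr fun i => ?_)
  simp only [monomialMul, Equiv.coe_addRight, sub_add_eq_sub_sub, sub_add_cancel]
  ring

theorem BoundedRobbaMem.monomialMul {x : ℤ → F} (hx : BoundedRobbaMem x) (s : F) (k : ℤ) :
    BoundedRobbaMem (monomialMul s k x) := by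
  obtain ⟨⟨B, hB⟩, η, hη0, hη1, hdec⟩ := hx
  refine ⟨⟨‖s‖ * B, ?_⟩, η, hη0, hη1, ?_⟩
  · rintro _ ⟨m, rfl⟩
    simp only [_root_.monomialMul, norm_mul]
    exact mul_le_mul_of_nonneg_left (hB ⟨m + k, rfl⟩) (norm_nonneg s)
  · have h := (hdec.comp (tendsto_atBot_add_const_right _ k tendsto_id)).const_mul
      (‖s‖ * η ^ (-k))
    rw [mul_zero] at h
    refine h.congr fun m => ?_
    simp only [_root_.monomialMul, Function.comp, id, norm_mul, zpow_add₀ hη0.ne', zpow_neg]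
    field_simp

theorem GaussBounded.boundedRobbaMem {r C D : ℝ} {x : ℤ → F} (hx : GaussBounded r C D x)
    (hr0 : 0 < r) (hr1 : r < 1) : BoundedRobbaMem x := by
  obtain ⟨η, hrη, hη1⟩ := exists_between hr1
  have hη0 : 0 < η := hr0.trans hrη
  refine ⟨⟨C, fun _ ⟨i, hi⟩ => hi ▸ (hx i).1⟩, η, hη0, hη1, ?_⟩
  have hρ : r / η < 1 := (div_lt_one hη0).mpr hrη
  refine squeeze_zero (g := fun i => D * (r / η) ^ (-i)) (fun i => by positivity) (fun i => ?_)
    (by simpa using (tendsto_zpow_neg_atBot_nhds_zero_of_lt_one (by positivity) hρ).const_mul D)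
  calc ‖x i‖ * η ^ i ≤ D * r ^ (-i) * η ^ i :=
        mul_le_mul_of_nonneg_right (hx i).2 (zpow_pos hη0 i).le
    _ = D * (r / η) ^ (-i) := by
        rw [div_zpow, zpow_neg η, div_inv_eq_mul, mul_assoc]

theorem gaussBounded_seriesOne_sub {r q : ℝ} {x : ℤ → F} (hr0 : 0 < r) (hq0 : 0 ≤ q)
    (h0 : x 0 = 1) (h1 : ∀ m, ‖x m‖ ≤ 1) (hdom : ∀ m ≠ 0, ‖x m‖ * r ^ m ≤ q) :
    GaussBounded r 1 q (seriesOne - x) := fun m => by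
  by_cases hm : m = 0
  · subst hm
    simp [seriesOne, h0, hq0]
  · simp only [Pi.sub_apply, seriesOne, if_neg hm, zero_sub, norm_neg]
    refine ⟨h1 m, ?_⟩
    rw [zpow_neg, ← div_eq_mul_inv, le_div_iff₀ (zpow_pos hr0 m)]
    exact hdom m hm

/-- Here `s t⁻ᵏ` is the inverse of the leftmost term of `a` of maximal norm. -/
theorem exists_monomialMul_normalized {c : ℝ} (hc0 : 0 < c) (hc1 : c < 1)
    (hcv : ∀ x : F, x ≠ 0 → ∃ n : ℤ, ‖x‖ = c ^ n) {a : ℤ → F} (ha : BoundedRobbaMem a)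
    (ha0 : a ≠ 0) :
    ∃ (s : F) (k : ℤ), monomialMul s k a 0 = 1 ∧ (∀ m, ‖monomialMul s k a m‖ ≤ 1) ∧
      ∀ m < 0, ‖monomialMul s k a m‖ ≤ c := by
  obtain ⟨hbdd, η, hη0, hη1, hdec⟩ := ha
  obtain ⟨i₀, hi₀, hmax, hlt⟩ := exists_dominant_index hc0 hc1 hcv hbdd ha0
    (tendsto_atBot_of_tendsto_mul_zpow (fun _ => norm_nonneg _) hη0 hη1.le hdec)
  have hpos : 0 < ‖a i₀‖ := norm_pos_iff.mpr hi₀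
  refine ⟨(a i₀)⁻¹, i₀, by simp [monomialMul, hi₀], fun m => ?_, fun m hm => ?_⟩
  · rw [monomialMul, norm_mul, norm_inv, inv_mul_le_iff₀ hpos, mul_one]
    exact hmax _
  · rw [monomialMul, norm_mul, norm_inv, inv_mul_le_iff₀ hpos, mul_comm]
    exact hlt _ (by omega)

end Monomial

/-- The bounded Robba ring is a field: every nonzero element has a multiplicative
inverse in the bounded Robba ring.  The hypothesis `hdisc` says that `K` is
discretely valued. -/
theorem bounded_robba_ring_is_field
    (hdisc : ∃ c : ℝ, 0 < c ∧ c < 1 ∧ ∀ x : K, x ≠ 0 → ∃ n : ℤ, ‖x‖ = c ^ n)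
    (a : ℤ → K) (ha : BoundedRobbaMem a) (ha0 : a ≠ 0) :
    ∃ b : ℤ → K, BoundedRobbaMem b ∧ seriesMul a b = seriesOne := by
  obtain ⟨c, hc0, hc1, hcv⟩ := hdisc
  obtain ⟨s, k, h0, h1, hneg⟩ := exists_monomialMul_normalized hc0 hc1 hcv ha ha0
  obtain ⟨-, η, hη0, hη1, hdec⟩ := ha.monomialMul s k
  obtain ⟨r, q, hr0, hr1, hq0, hq1, hdom⟩ :=
    exists_mul_zpow_le_of_dominant hc0 hc1 hη0 hη1 (fun _ => norm_nonneg _) h1 hneg hdec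
  obtain ⟨b, hb, hinv⟩ :=
    exists_seriesMul_one_sub_eq_one hr0 hr1 hq1 (gaussBounded_seriesOne_sub hr0 hq0 h0 h1 hdom)
  refine ⟨monomialMul s k b, (hb.boundedRobbaMem hr0 hr1).monomialMul s k, ?_⟩
  rw [seriesMul_monomialMul_right, ← hinv, sub_sub_cancel]
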